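/- Let X be a reduced ACM zero-dimensional subscheme of P^1 × P^1, let P_{i_1 j_1},…,P_{i_h j_h} ∈ X be interior points with pairwise distinct row indices i_1,…,i_h and pairwise distinct column indices j_1,…,j_h, and set Z_l = X \ {P_{i_1 j_1},…,P_{i_l j_l}} with q_l + 1 = #(X ∩ C_{j_l}), p_l + 1 = #(X ∩ R_{i_l}). Then for each l = 1,…,h−1: H_{Z_{l+1}}(i,j) = H_{Z_l}(i,j) if (i,j) is not ≥ (q_{l+1}, p_{l+1}) componentwise, and H_{Z_{l+1}}(i,j) = H_{Z_l}(i,j) − 1 if (i,j) ≥ (q_{l+1}, p_{l+1}). -/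

import Mathlib

/- Common setup: the bigraded coordinate ring of Q = P^1 x P^1, bigraded Hilbert
functions, point ideals, separators, minimal free resolutions, staircase (Ferrers)
configurations of reduced ACM schemes. -/

open MvPolynomial

attribute [local instance] Classical.propDecidable

noncomputable section

/-- Variables of the bihomogeneous coordinate ring: `inl` = x₀,x₁ and `inr` = y₀,y₁. -/
abbrev BiVar := Fin 2 ⊕ Fin 2

/-- The bigraded coordinate ring S = k[x₀,x₁;y₀,y₁] of Q = P¹ × P¹. -/
abbrev S2 (k : Type) [Field k] := MvPolynomial BiVar k

/-- The bigrading weights: x-variables have degree (1,0), y-variables degree (0,1). -/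
def bw : BiVar → ℕ × ℕ := Sum.elim (fun _ => (1, 0)) (fun _ => (0, 1))

/-- P¹ over k. -/
abbrev P1 (k : Type) [Field k] := Projectivization k (Fin 2 → k)

/-- A point of Q = P¹ × P¹. -/
abbrev PtQ (k : Type) [Field k] := P1 k × P1 k

variable {k : Type} [Field k]

/-- Evaluation of a polynomial at (a representative of) a point of Q. -/
def evalPt (x : PtQ k) : S2 k →+* k :=
  MvPolynomial.eval (Sum.elim x.1.rep x.2.rep)

/-- An ideal is bihomogeneous if it contains all bihomogeneous components of its members. -/
def IsBihom (I : Ideal (S2 k)) : Prop :=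
  ∀ f ∈ I, ∀ d : ℕ × ℕ, weightedHomogeneousComponent bw d f ∈ I

/-- Saturation with respect to the irrelevant ideal (x₀,x₁) ∩ (y₀,y₁). -/
def IsSat (I : Ideal (S2 k)) : Prop :=
  ∀ f : S2 k, (∀ i j : Fin 2, X (Sum.inl i) * X (Sum.inr j) * f ∈ I) → f ∈ I

/-- The zero locus in Q of a (bihomogeneous) ideal. -/
def biZeroLocus (I : Ideal (S2 k)) : Set (PtQ k) :=
  {x | ∀ f ∈ I, ∀ d : ℕ × ℕ, evalPt x (weightedHomogeneousComponent bw d f) = 0}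

/-- The (saturated) ideal of a point of Q: generated by the bihomogeneous forms vanishing there. -/
def pointIdeal (x : PtQ k) : Ideal (S2 k) :=
  Ideal.span {f | (∃ d : ℕ × ℕ, IsWeightedHomogeneous bw f d) ∧ evalPt x f = 0}

/-- The saturated ideal of a reduced finite set of points of Q. -/
def idealOfFinset (Z : Finset (PtQ k)) : Ideal (S2 k) :=
  ⨅ x ∈ Z, pointIdeal x

/-- The bigraded piece of degree d of an ideal, as a k-subspace. -/
def Ipiece (I : Ideal (S2 k)) (d : ℕ × ℕ) : Submodule k (S2 k) :=
  (Submodule.restrictScalars k I) ⊓ weightedHomogeneousSubmodule k bw d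

/-- The bigraded Hilbert function M_X(i,j) = dim S_{i,j} - dim (I_X)_{i,j}. -/
def hilb (I : Ideal (S2 k)) (i j : ℕ) : ℕ :=
  Module.finrank k (weightedHomogeneousSubmodule k bw ((i, j) : ℕ × ℕ)) -
    Module.finrank k (Ipiece I (i, j))

/-- The Hilbert function extended by 0 to negative arguments. -/
def HM (I : Ideal (S2 k)) (i j : ℤ) : ℤ :=
  if 0 ≤ i ∧ 0 ≤ j then (hilb I i.toNat j.toNat : ℤ) else 0

/-- The first difference ΔM_X of the Hilbert function. -/
def ΔH (I : Ideal (S2 k)) (i j : ℤ) : ℤ :=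
  HM I i j - HM I (i - 1) j - HM I i (j - 1) + HM I (i - 1) (j - 1)

/-- Index of a nonzero coordinate of a nonzero vector in k². -/
def pivot (v : Fin 2 → k) : Fin 2 := if v 0 ≠ 0 then 0 else 1

/-- The other index. -/
def off : Fin 2 → Fin 2 := fun s => if s = 0 then 1 else 0

/-- Dehomogenization onto the affine chart around a point of Q. -/
def chartHom (x : PtQ k) : S2 k →+* MvPolynomial (Fin 2) k :=
  (aeval (R := k) (Sum.elim
    (fun i : Fin 2 => if i = pivot x.1.rep then 1 else X 0)
    (fun j : Fin 2 => if j = pivot x.2.rep then 1 else X 1))).toRingHom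

/-- The affine coordinates of a point of Q in its chart. -/
def affPt (x : PtQ k) : Fin 2 → k := fun u =>
  if u = 0 then x.1.rep (off (pivot x.1.rep)) / x.1.rep (pivot x.1.rep)
  else x.2.rep (off (pivot x.2.rep)) / x.2.rep (pivot x.2.rep)

/-- The multiplicity m_X(P): the length of the local ring O_{X,P}, computed in the
affine chart as the stable value of dim A/(I_aff + m_P^n). -/
def mult (I : Ideal (S2 k)) (x : PtQ k) : ℕ :=
  ⨆ n : ℕ, Module.finrank k
    (MvPolynomial (Fin 2) k ⧸
      (Ideal.map (chartHom x) I ⊔ (RingHom.ker (MvPolynomial.eval (affPt x))) ^ n))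

/-- X is arithmetically Cohen–Macaulay: depth S(X) = 2, i.e. there is a regular
sequence of length two on S/I_X inside the maximal ideal of S. -/
def IsACM (I : Ideal (S2 k)) : Prop :=
  ∃ f g : S2 k, constantCoeff f = 0 ∧ constantCoeff g = 0 ∧
    (∀ h : S2 k, f * h ∈ I → h ∈ I) ∧
    (∀ h : S2 k, g * h ∈ I ⊔ Ideal.span {f} → h ∈ I ⊔ Ideal.span {f})

/-- f is a separator of degree d for the point x relative to the residual scheme Z:
f is bihomogeneous of degree d, vanishes on Z, and is nonzero at x. -/
def IsSeparator (IZ : Ideal (S2 k)) (x : PtQ k) (f : S2 k) (d : ℕ × ℕ) : Prop :=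
  IsWeightedHomogeneous bw f d ∧ f ∈ IZ ∧ evalPt x f ≠ 0

/-- The set of separating degrees for x relative to Z. -/
def SepDegs (IZ : Ideal (S2 k)) (x : PtQ k) : Set (ℕ × ℕ) :=
  {d | ∃ f, IsSeparator IZ x f d}

/-- d is a minimal separating degree (componentwise partial order). -/
def IsMinSepDeg (IZ : Ideal (S2 k)) (x : PtQ k) (d : ℕ × ℕ) : Prop :=
  d ∈ SepDegs IZ x ∧ ∀ e ∈ SepDegs IZ x, ¬ e < d

/-- d is the unique minimal separating degree. -/
def UniqueMinSepDeg (IZ : Ideal (S2 k)) (x : PtQ k) (d : ℕ × ℕ) : Prop :=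
  IsMinSepDeg IZ x d ∧ ∀ e, IsMinSepDeg IZ x e → e = d

/-- f splits into a product of forms of degree (1,0) and (0,1), i.e. the curve f = 0
is a union of (1,0)- and (0,1)-lines. -/
def SplitsIntoLines (f : S2 k) : Prop :=
  ∃ L : Multiset (S2 k),
    (∀ l ∈ L, IsWeightedHomogeneous bw l ((1 : ℕ), (0 : ℕ)) ∨
      IsWeightedHomogeneous bw l ((0 : ℕ), (1 : ℕ))) ∧ f = L.prod

/-- `IsMFR3 I d0 d1 d2` : the ideal I has minimal bigraded free resolution
0 → ⊕ S(-d2 i) → ⊕ S(-d1 i) → ⊕ S(-d0 i) → I → 0, given by a minimal generating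
system of the listed degrees, a first-syzygy matrix A and a second-syzygy matrix B,
homogeneous of the appropriate degrees, with entries in the maximal ideal (minimality). -/
def IsMFR3 {ι₀ ι₁ ι₂ : Type} [Fintype ι₀] [Fintype ι₁] [Fintype ι₂]
    (I : Ideal (S2 k)) (d0 : ι₀ → ℕ × ℕ) (d1 : ι₁ → ℕ × ℕ) (d2 : ι₂ → ℕ × ℕ) : Prop :=
  ∃ (g : ι₀ → S2 k) (A : ι₁ → ι₀ → S2 k) (B : ι₂ → ι₁ → S2 k),
    (∀ i, IsWeightedHomogeneous bw (g i) (d0 i)) ∧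
    I = Ideal.span (Set.range g) ∧
    (∀ i j, A i j = 0 ∨ (d0 j ≤ d1 i ∧
      IsWeightedHomogeneous bw (A i j) ((d1 i).1 - (d0 j).1, (d1 i).2 - (d0 j).2))) ∧
    (∀ i j, constantCoeff (A i j) = 0) ∧
    (∀ i, ∑ j, A i j * g j = 0) ∧
    (∀ v : ι₀ → S2 k, ∑ j, v j * g j = 0 →
      ∃ c : ι₁ → S2 k, ∀ j, v j = ∑ i, c i * A i j) ∧
    (∀ i j, B i j = 0 ∨ (d1 j ≤ d2 i ∧
      IsWeightedHomogeneous bw (B i j) ((d2 i).1 - (d1 j).1, (d2 i).2 - (d1 j).2))) ∧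
    (∀ i j, constantCoeff (B i j) = 0) ∧
    (∀ i j, ∑ l, B i l * A l j = 0) ∧
    (∀ c : ι₁ → S2 k, (∀ j, ∑ i, c i * A i j = 0) →
      ∃ e : ι₂ → S2 k, ∀ i, c i = ∑ l, e l * B l i) ∧
    (∀ e : ι₂ → S2 k, (∀ i, ∑ l, e l * B l i = 0) → e = 0)

/-- A minimal free resolution of length 2 (the ACM case). -/
def IsMFR2 {ι₀ ι₁ : Type} [Fintype ι₀] [Fintype ι₁]
    (I : Ideal (S2 k)) (d0 : ι₀ → ℕ × ℕ) (d1 : ι₁ → ℕ × ℕ) : Prop :=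
  IsMFR3 I d0 d1 (fun e : Fin 0 => e.elim0)

/-- A reduced ACM zero-dimensional scheme in Q: points P_{ij} = R_i ∩ C_j indexed by a
lower-closed (staircase/Ferrers) diagram D in a grid of distinct (1,0)-lines R_i and
(0,1)-lines C_j, each containing at least one point of X. -/
structure Staircase (k : Type) [Field k] where
  a : ℕ
  b : ℕ
  R : ℕ → P1 k
  C : ℕ → P1 k
  hR : ∀ i ≤ a, ∀ i' ≤ a, R i = R i' → i = i'
  hC : ∀ j ≤ b, ∀ j' ≤ b, C j = C j' → j = j'
  D : Finset (ℕ × ℕ)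
  bound : ∀ p ∈ D, p.1 ≤ a ∧ p.2 ≤ b
  lower : ∀ p ∈ D, ∀ q : ℕ × ℕ, q.1 ≤ p.1 → q.2 ≤ p.2 → q ∈ D
  rows : ∀ i ≤ a, (i, 0) ∈ D
  cols : ∀ j ≤ b, (0, j) ∈ D

namespace Staircase

variable (T : Staircase k)

/-- The points of X. -/
def pts : Finset (PtQ k) := T.D.image (fun p => (T.R p.1, T.C p.2))

/-- The saturated ideal of X. -/
def ideal : Ideal (S2 k) := idealOfFinset T.pts

/-- #(X ∩ R_i). -/
def rowCount (i : ℕ) : ℕ := (T.D.filter (fun p => p.1 = i)).card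

/-- #(X ∩ C_j). -/
def colCount (j : ℕ) : ℕ := (T.D.filter (fun p => p.2 = j)).card

/-- (r,s) is a corner for X: P_{r-1,s}, P_{r,s-1} ∈ X but P_{r,s} ∉ X. -/
def IsCorner (r s : ℕ) : Prop :=
  0 < r ∧ 0 < s ∧ (r - 1, s) ∈ T.D ∧ (r, s - 1) ∈ T.D ∧ (r, s) ∉ T.D

/-- P_{ij} is an interior point of X: strictly dominated componentwise by some corner. -/
def Interior (i j : ℕ) : Prop :=
  (i, j) ∈ T.D ∧ ∃ r s, T.IsCorner r s ∧ i < r ∧ j < s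

/-- The saturated ideal of X minus the points of X indexed by E. -/
def residual (E : Finset (ℕ × ℕ)) : Ideal (S2 k) :=
  idealOfFinset ((T.D \ E).image (fun p => (T.R p.1, T.C p.2)))

end Staircase

/-- (i,j) is a vertex for a difference matrix c. -/
def IsVertexΔ (c : ℤ → ℤ → ℤ) (i j : ℤ) : Prop :=
  c (i - 1) j ≤ 0 ∧ c i (j - 1) ≤ 0 ∧ c (i - 1) (j - 1) = 1

/-- (i,j) is a corner for a difference matrix c. -/
def IsCornerΔ (c : ℤ → ℤ → ℤ) (i j : ℤ) : Prop :=
  c i j ≤ 0 ∧ c i (j - 1) = 1 ∧ c (i - 1) j = 1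

end

/-! Removing a point `P` from a finite set `Z ∪ {P}` lowers the Hilbert function by one exactly in
the degrees where `P` has a separator: a form vanishing on `Z` but not at `P`.

Let `P = P_{i₀j₀}` be the next point removed. Since the removed points have pairwise distinct rows
and columns, the `q` other points of `X` on the column of `P` and the `p` other points on its row
all survive. A form of bidegree `(i, j)` restricts to a binary form of degree `i` on that column, so
if `i < q` it cannot vanish at those `q` points without vanishing at `P`; symmetrically if `j < p`.
Conversely, by the staircase shape every point of `X ∖ {P}` lies on one of those `q` rows or `p`
columns, so the product of their equations, times a monomial not vanishing at `P`, is a separator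
of every bidegree `(i, j) ≥ (q, p)`. -/

open Finset

namespace MvPolynomial

variable {σ τ R : Type*} [CommSemiring R]

theorem IsWeightedHomogeneous.comp_weight {M N : Type*} [AddCommMonoid M] [AddCommMonoid N]
    {ω : σ → M} {f : MvPolynomial σ R} {m : M} (hf : IsWeightedHomogeneous ω f m)
    (φ : M →+ N) : IsWeightedHomogeneous (φ ∘ ω) f (φ m) := by
  intro d hd
  rw [← hf hd, Finsupp.weight_apply, Finsupp.weight_apply, map_finsuppSum]
  simp only [Function.comp_apply, map_nsmul]

theorem IsWeightedHomogeneous.isHomogeneous_aeval {ω : σ → ℕ} {f : MvPolynomial σ R} {n : ℕ}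
    (hf : IsWeightedHomogeneous ω f n) {g : σ → MvPolynomial τ R}
    (hg : ∀ s, (g s).IsHomogeneous (ω s)) : (aeval g f).IsHomogeneous n := by
  rw [aeval_eq_eval₂Hom, coe_eval₂Hom, eval₂_eq]
  refine IsHomogeneous.sum _ _ _ fun d hd => ?_
  rw [← zero_add n, ← hf (mem_support_iff.1 hd), Finsupp.weight_apply, Finsupp.sum]
  refine (isHomogeneous_C _ _).mul (IsHomogeneous.prod _ _ _ fun s _ => ?_)
  simpa [mul_comm] using (hg s).pow (d s)

theorem IsHomogeneous.eval_smul {f : MvPolynomial σ R} {n : ℕ} (hf : f.IsHomogeneous n)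
    (α : R) (x : σ → R) : eval (α • x) f = α ^ n * eval x f := by
  rw [eval_eq, eval_eq, mul_sum]
  refine sum_congr rfl fun d hd => ?_
  have hdeg : ∑ s ∈ d.support, d s = n := by
    simpa [Finsupp.weight_apply, Finsupp.sum] using hf (mem_support_iff.1 hd)
  simp only [Pi.smul_apply, smul_eq_mul, mul_pow, prod_mul_distrib, prod_pow_eq_pow_sum, hdeg]
  ring

theorem natDegree_aeval_le_totalDegree {g : σ → Polynomial R}
    (hg : ∀ s, (g s).natDegree ≤ 1) (f : MvPolynomial σ R) :
    (aeval g f).natDegree ≤ f.totalDegree := by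
  rw [aeval_eq_eval₂Hom, coe_eval₂Hom, eval₂_eq]
  refine Polynomial.natDegree_sum_le_of_forall_le _ _ fun d hd => ?_
  refine (Polynomial.natDegree_C_mul_le _ _).trans ((Polynomial.natDegree_prod_le _ _).trans ?_)
  calc ∑ s ∈ d.support, (g s ^ d s).natDegree ≤ ∑ s ∈ d.support, d s :=
        sum_le_sum fun s _ =>
          Polynomial.natDegree_pow_le.trans (by simpa using Nat.mul_le_mul_left (d s) (hg s))
    _ ≤ f.totalDegree := le_totalDegree hd

end MvPolynomial

theorem Submodule.finrank_inf_ker_add_one {K V : Type*} [Field K] [AddCommGroup V] [Module K V]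
    {W : Submodule K V} [FiniteDimensional K W] {φ : V →ₗ[K] K} (h : ∃ f ∈ W, φ f ≠ 0) :
    Module.finrank K (W ⊓ LinearMap.ker φ : Submodule K V) + 1 = Module.finrank K W := by
  obtain ⟨f, hfW, hf⟩ := h
  have hψ : φ.domRestrict W ≠ 0 := fun h0 => hf (by simpa using LinearMap.congr_fun h0 ⟨f, hfW⟩)
  rw [← Module.Dual.finrank_ker_add_one_of_ne_zero hψ, LinearMap.ker_domRestrict,
    ← Submodule.finrank_map_subtype_eq, Submodule.map_comap_subtype]

section

variable {k : Type} [Field k]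

def cross (u v : Fin 2 → k) : k := u 0 * v 1 - u 1 * v 0

theorem cross_eq_zero_iff {u v : Fin 2 → k} (hu : u ≠ 0) (hv : v ≠ 0) :
    cross u v = 0 ↔ Projectivization.mk k u hu = Projectivization.mk k v hv := by
  constructor
  · intro h
    obtain ⟨s, hs⟩ : ∃ s, u s ≠ 0 := by
      by_contra! h0
      exact hu (funext h0)
    refine ((Projectivization.mk_eq_mk_iff' k v u hv hu).2 ⟨v s / u s, funext fun t => ?_⟩).symm
    simp only [cross] at h
    fin_cases s <;> fin_cases t <;> simp at hs ⊢ <;> field_simp <;>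
      first | linear_combination h | linear_combination -h
  · intro h
    obtain ⟨a, rfl⟩ := (Projectivization.mk_eq_mk_iff' k u v hu hv).1 h
    simp only [cross, Pi.smul_apply, smul_eq_mul]
    ring

theorem cross_rep_eq_zero_iff {a b : P1 k} : cross a.rep b.rep = 0 ↔ a = b := by
  rw [cross_eq_zero_iff a.rep_nonzero b.rep_nonzero, Projectivization.mk_rep,
    Projectivization.mk_rep]

theorem cross_smul_eq (u v w : Fin 2 → k) : cross v w • u = cross u w • v + cross v u • w := by
  ext s
  fin_cases s <;> simp [cross] <;> ring

instance [Infinite k] : Infinite (P1 k) :=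
  Infinite.of_injective (fun z : k => Projectivization.mk k ![1, z] (by simp)) fun z z' h => by
    rw [← cross_eq_zero_iff] at h
    simpa [cross, sub_eq_zero, eq_comm] using h

theorem MvPolynomial.IsHomogeneous.eval_rep_eq_zero_of_lt_card [Infinite k]
    {F : MvPolynomial (Fin 2) k} {n : ℕ} (hF : F.IsHomogeneous n) {A : Finset (P1 k)}
    (hA : n < #A) (hzero : ∀ a ∈ A, eval a.rep F = 0) (c : P1 k) : eval c.rep F = 0 := by
  obtain ⟨e, he⟩ := Infinite.exists_notMem_finset (insert c A)
  set v := c.rep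
  set w := e.rep
  have hvw : cross v w ≠ 0 := cross_rep_eq_zero_iff.not.2 fun h => he (h ▸ mem_insert_self _ _)
  have haw (a : P1 k) (ha : a ∈ A) : cross a.rep w ≠ 0 :=
    cross_rep_eq_zero_iff.not.2 fun h => he (h ▸ mem_insert_of_mem ha)
  -- Each `a ∈ A` is a nonzero multiple of `v + t a • w`, so the `t a` are distinct roots of the
  -- restriction `p` of `F` to the affine line `τ ↦ v + τ • w`, of degree at most `n`.
  let t (a : P1 k) : k := cross v a.rep / cross a.rep w
  have hdecomp (a : P1 k) (ha : a ∈ A) : a.rep = (cross a.rep w / cross v w) • (v + t a • w) := by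
    apply smul_right_injective _ hvw
    simp only [cross_smul_eq a.rep v w, smul_add, smul_smul, t]
    congr 2 <;> field_simp [haw a ha]
  let p : Polynomial k :=
    MvPolynomial.aeval (fun s => Polynomial.C (v s) + Polynomial.C (w s) * Polynomial.X) F
  have hp (τ : k) : p.eval τ = eval (v + τ • w) F := by
    rw [← Polynomial.coe_aeval_eq_eval, ← AlgHom.comp_apply, comp_aeval, aeval_eq_eval]
    congr 2
    funext s
    simp only [map_add, map_mul, Polynomial.aeval_C, Polynomial.aeval_X, Pi.add_apply,
      Pi.smul_apply, smul_eq_mul, Algebra.algebraMap_self, RingHom.id_apply]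
    ring
  have hpdeg : p.natDegree ≤ n :=
    (natDegree_aeval_le_totalDegree (fun s => by compute_degree) F).trans hF.totalDegree_le
  have hroot (a : P1 k) (ha : a ∈ A) : p.eval (t a) = 0 := by
    have := hzero a ha
    rw [hdecomp a ha, hF.eval_smul] at this
    rw [hp]
    exact (mul_eq_zero.1 this).resolve_left (pow_ne_zero _ (div_ne_zero (haw a ha) hvw))
  have hmk (a : P1 k) (ha : a ∈ A) : ∃ h, a = Projectivization.mk k (v + t a • w) h := by
    refine ⟨fun h0 => a.rep_nonzero (by rw [hdecomp a ha, h0, smul_zero]), ?_⟩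
    conv_lhs => rw [← a.mk_rep]
    exact (Projectivization.mk_eq_mk_iff' k _ _ _ _).2 ⟨_, (hdecomp a ha).symm⟩
  have ht : Set.InjOn t A := by
    intro a ha b hb hab
    obtain ⟨h1, ea⟩ := hmk a ha
    obtain ⟨h2, eb⟩ := hmk b hb
    rw [ea, eb]
    simp only [hab]
  have hp0 : p = 0 := Polynomial.eq_zero_of_natDegree_lt_card_of_eval_eq_zero' p (A.image t)
    (by simpa using hroot) (by rw [card_image_of_injOn ht]; omega)
  simpa [hp0] using (hp 0).symm

theorem evalPt_mk (a b : P1 k) (f : S2 k) : evalPt (a, b) f = eval (Sum.elim a.rep b.rep) f :=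
  rfl

theorem evalPt_eq_zero_of_mem_pointIdeal {x : PtQ k} {f : S2 k} (h : f ∈ pointIdeal x) :
    evalPt x f = 0 :=
  (Ideal.span_le (I := RingHom.ker (evalPt x))).2 (fun _ hg => hg.2) h

theorem mem_idealOfFinset_iff {Z : Finset (PtQ k)} {f : S2 k} {d : ℕ × ℕ}
    (hf : IsWeightedHomogeneous bw f d) : f ∈ idealOfFinset Z ↔ ∀ x ∈ Z, evalPt x f = 0 := by
  simp only [idealOfFinset, Ideal.mem_iInf]
  exact forall₂_congr fun x _ =>
    ⟨evalPt_eq_zero_of_mem_pointIdeal, fun h => Ideal.subset_span ⟨⟨d, hf⟩, h⟩⟩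

theorem mem_sepDegs_idealOfFinset_iff {Z : Finset (PtQ k)} {P : PtQ k} {d : ℕ × ℕ} :
    d ∈ SepDegs (idealOfFinset Z) P ↔
      ∃ f, IsWeightedHomogeneous bw f d ∧ (∀ x ∈ Z, evalPt x f = 0) ∧ evalPt P f ≠ 0 :=
  exists_congr fun _ => and_congr_right fun hf => and_congr_left' (mem_idealOfFinset_iff hf)

noncomputable def evalPtₗ (x : PtQ k) : S2 k →ₗ[k] k :=
  (aeval (Sum.elim x.1.rep x.2.rep)).toLinearMap

theorem evalPtₗ_apply (x : PtQ k) (f : S2 k) : evalPtₗ x f = evalPt x f := rfl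

theorem Ipiece_idealOfFinset_insert (Z : Finset (PtQ k)) (P : PtQ k) (d : ℕ × ℕ) :
    Ipiece (idealOfFinset (insert P Z)) d =
      Ipiece (idealOfFinset Z) d ⊓ LinearMap.ker (evalPtₗ P) := by
  ext f
  simp only [Ipiece, Submodule.mem_inf, Submodule.restrictScalars_mem, LinearMap.mem_ker,
    evalPtₗ_apply, mem_weightedHomogeneousSubmodule]
  constructor
  · rintro ⟨hI, hf⟩
    rw [mem_idealOfFinset_iff hf, forall_mem_insert] at hI
    exact ⟨⟨(mem_idealOfFinset_iff hf).2 hI.2, hf⟩, hI.1⟩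
  · rintro ⟨⟨hI, hf⟩, hP⟩
    rw [mem_idealOfFinset_iff hf] at hI
    exact ⟨(mem_idealOfFinset_iff hf).2 ((forall_mem_insert _ _ _).2 ⟨hP, hI⟩), hf⟩

instance (d : ℕ × ℕ) : FiniteDimensional k (weightedHomogeneousSubmodule k bw d) := by
  have hle : weightedHomogeneousSubmodule k bw d ≤ homogeneousSubmodule BiVar k (d.1 + d.2) := by
    intro f hf
    have hbw : (AddMonoidHom.fst ℕ ℕ + AddMonoidHom.snd ℕ ℕ) ∘ bw = 1 := by
      funext s
      cases s <;> rfl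
    have := hf.comp_weight (AddMonoidHom.fst ℕ ℕ + AddMonoidHom.snd ℕ ℕ)
    rwa [hbw] at this
  have : FiniteDimensional k (homogeneousSubmodule BiVar k (d.1 + d.2)) :=
    Module.Finite.iff_fg.2 (homogeneousSubmodule_fg _ _ _)
  exact Submodule.finiteDimensional_of_le hle

theorem Ipiece_le (I : Ideal (S2 k)) (d : ℕ × ℕ) :
    Ipiece I d ≤ weightedHomogeneousSubmodule k bw d :=
  inf_le_right

theorem hilb_insert_of_mem_sepDegs {Z : Finset (PtQ k)} {P : PtQ k} {i j : ℕ}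
    (h : (i, j) ∈ SepDegs (idealOfFinset Z) P) :
    hilb (idealOfFinset (insert P Z)) i j = hilb (idealOfFinset Z) i j + 1 := by
  obtain ⟨f, hf, hfZ, hfP⟩ := h
  have := Submodule.finiteDimensional_of_le (Ipiece_le (idealOfFinset Z) (i, j))
  have hcodim := Submodule.finrank_inf_ker_add_one (W := Ipiece (idealOfFinset Z) (i, j))
    (φ := evalPtₗ P) ⟨f, ⟨hfZ, hf⟩, hfP⟩
  -- typed by hand: the type inferred from `Ipiece_le` reaches `S2 k`'s module structure by a
  -- different (defeq) instance path than `hilb`, and `omega` would see two distinct atoms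
  have hle : Module.finrank k (Ipiece (idealOfFinset Z) (i, j)) ≤
      Module.finrank k (weightedHomogeneousSubmodule k bw ((i, j) : ℕ × ℕ)) :=
    Submodule.finrank_mono (Ipiece_le _ _)
  rw [hilb, hilb, Ipiece_idealOfFinset_insert]
  omega

theorem hilb_insert_of_notMem_sepDegs {Z : Finset (PtQ k)} {P : PtQ k} {i j : ℕ}
    (h : (i, j) ∉ SepDegs (idealOfFinset Z) P) :
    hilb (idealOfFinset (insert P Z)) i j = hilb (idealOfFinset Z) i j := by
  rw [hilb, hilb, Ipiece_idealOfFinset_insert, inf_eq_left.2]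
  intro f hf
  by_contra hP
  exact h ⟨f, (mem_weightedHomogeneousSubmodule _ _ _ _).1 hf.2, hf.1, hP⟩

noncomputable def rowForm (a : P1 k) : S2 k :=
  C (a.rep 1) * X (Sum.inl 0) - C (a.rep 0) * X (Sum.inl 1)

noncomputable def colForm (b : P1 k) : S2 k :=
  C (b.rep 1) * X (Sum.inr 0) - C (b.rep 0) * X (Sum.inr 1)

theorem evalPt_rowForm (x : PtQ k) (a : P1 k) :
    evalPt x (rowForm a) = cross x.1.rep a.rep := by
  simp only [rowForm, evalPt, cross, map_sub, map_mul, eval_C, eval_X, Sum.elim_inl]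
  ring

theorem evalPt_colForm (x : PtQ k) (b : P1 k) :
    evalPt x (colForm b) = cross x.2.rep b.rep := by
  simp only [colForm, evalPt, cross, map_sub, map_mul, eval_C, eval_X, Sum.elim_inr]
  ring

theorem isWeightedHomogeneous_rowForm (a : P1 k) :
    IsWeightedHomogeneous bw (rowForm a) (1, 0) :=
  ((isWeightedHomogeneous_X k bw _).C_mul _).sub ((isWeightedHomogeneous_X k bw _).C_mul _)

theorem isWeightedHomogeneous_colForm (b : P1 k) :
    IsWeightedHomogeneous bw (colForm b) (0, 1) :=
  ((isWeightedHomogeneous_X k bw _).C_mul _).sub ((isWeightedHomogeneous_X k bw _).C_mul _)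

theorem pivot_ne_zero {v : Fin 2 → k} (hv : v ≠ 0) : v (pivot v) ≠ 0 := by
  unfold pivot
  split_ifs with h
  · exact h
  · intro h1
    exact hv (funext fun s => by fin_cases s <;> simp_all)

theorem mem_sepDegs_of_subset_lines {Z : Finset (PtQ k)} {P : PtQ k} {A B : Finset (P1 k)}
    (hA : P.1 ∉ A) (hB : P.2 ∉ B) (hZ : ∀ x ∈ Z, x.1 ∈ A ∨ x.2 ∈ B) {i j : ℕ}
    (hi : #A ≤ i) (hj : #B ≤ j) : (i, j) ∈ SepDegs (idealOfFinset Z) P := by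
  let f : S2 k := (∏ a ∈ A, rowForm a) * (∏ b ∈ B, colForm b) *
    X (Sum.inl (pivot P.1.rep)) ^ (i - #A) * X (Sum.inr (pivot P.2.rep)) ^ (j - #B)
  refine mem_sepDegs_idealOfFinset_iff.2 ⟨f, ?_, fun x hx => ?_, ?_⟩
  · convert (((IsWeightedHomogeneous.prod A _ _ fun a _ => isWeightedHomogeneous_rowForm a).mul
      (IsWeightedHomogeneous.prod B _ _ fun b _ => isWeightedHomogeneous_colForm b)).mul
      ((isWeightedHomogeneous_X k bw (Sum.inl (pivot P.1.rep))).pow (i - #A))).mul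
      ((isWeightedHomogeneous_X k bw (Sum.inr (pivot P.2.rep))).pow (j - #B)) using 1
    simp [bw, Prod.ext_iff]
    omega
  · simp only [f, map_mul, map_prod]
    rcases hZ x hx with h | h
    · rw [prod_eq_zero h (by rw [evalPt_rowForm, cross_rep_eq_zero_iff])]
      simp
    · rw [prod_eq_zero h (by rw [evalPt_colForm, cross_rep_eq_zero_iff])]
      simp
  · simp only [f, map_mul, map_pow, map_prod, evalPt_rowForm, evalPt_colForm]
    refine mul_ne_zero (mul_ne_zero (mul_ne_zero ?_ ?_) ?_) ?_
    · exact prod_ne_zero_iff.2 fun a ha => cross_rep_eq_zero_iff.not.2 fun h => hA (h ▸ ha)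
    · exact prod_ne_zero_iff.2 fun b hb => cross_rep_eq_zero_iff.not.2 fun h => hB (h ▸ hb)
    · exact pow_ne_zero _ (by simpa [evalPt] using pivot_ne_zero P.1.rep_nonzero)
    · exact pow_ne_zero _ (by simpa [evalPt] using pivot_ne_zero P.2.rep_nonzero)

theorem eval_aeval_sumElim_X_C (u c : Fin 2 → k) (f : S2 k) :
    eval u (aeval (Sum.elim X (C ∘ c)) f) = eval (Sum.elim u c) f := by
  rw [← aeval_eq_eval, aeval_eq_bind₁, aeval_bind₁, aeval_eq_eval]
  congr 2
  funext s
  cases s <;> simp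

theorem eval_aeval_sumElim_C_X (c u : Fin 2 → k) (f : S2 k) :
    eval u (aeval (Sum.elim (C ∘ c) X) f) = eval (Sum.elim c u) f := by
  rw [← aeval_eq_eval, aeval_eq_bind₁, aeval_bind₁, aeval_eq_eval]
  congr 2
  funext s
  cases s <;> simp

theorem notMem_sepDegs_of_lt_card_column [Infinite k] {Z : Finset (PtQ k)} {P : PtQ k}
    {A : Finset (P1 k)} (hAZ : ∀ a ∈ A, (a, P.2) ∈ Z) {i j : ℕ} (hi : i < #A) :
    (i, j) ∉ SepDegs (idealOfFinset Z) P := by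
  rintro ⟨f, hf, hfZ, hfP⟩
  rw [mem_idealOfFinset_iff hf] at hfZ
  have hF : (aeval (Sum.elim X (C ∘ P.2.rep)) f).IsHomogeneous i :=
    (hf.comp_weight (AddMonoidHom.fst ℕ ℕ)).isHomogeneous_aeval fun s => by
      cases s <;> simp [bw, isHomogeneous_X, isHomogeneous_C]
  have := hF.eval_rep_eq_zero_of_lt_card hi (fun a ha => by
    rw [eval_aeval_sumElim_X_C, ← evalPt_mk]
    exact hfZ _ (hAZ a ha)) P.1
  rw [eval_aeval_sumElim_X_C, ← evalPt_mk] at this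
  exact hfP this

theorem notMem_sepDegs_of_lt_card_row [Infinite k] {Z : Finset (PtQ k)} {P : PtQ k}
    {B : Finset (P1 k)} (hBZ : ∀ b ∈ B, (P.1, b) ∈ Z) {i j : ℕ} (hj : j < #B) :
    (i, j) ∉ SepDegs (idealOfFinset Z) P := by
  rintro ⟨f, hf, hfZ, hfP⟩
  rw [mem_idealOfFinset_iff hf] at hfZ
  have hF : (aeval (Sum.elim (C ∘ P.1.rep) X) f).IsHomogeneous j :=
    (hf.comp_weight (AddMonoidHom.snd ℕ ℕ)).isHomogeneous_aeval fun s => by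
      cases s <;> simp [bw, isHomogeneous_X, isHomogeneous_C]
  have := hF.eval_rep_eq_zero_of_lt_card hj (fun b hb => by
    rw [eval_aeval_sumElim_C_X, ← evalPt_mk]
    exact hfZ _ (hBZ b hb)) P.2
  rw [eval_aeval_sumElim_C_X, ← evalPt_mk] at this
  exact hfP this

namespace Staircase

variable (T : Staircase k)

noncomputable def point (p : ℕ × ℕ) : PtQ k := (T.R p.1, T.C p.2)

noncomputable def residualPts (E : Finset (ℕ × ℕ)) : Finset (PtQ k) := (T.D \ E).image T.point

theorem residual_eq (E : Finset (ℕ × ℕ)) : T.residual E = idealOfFinset (T.residualPts E) := rfl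

theorem residualPts_eq_insert {p₀ : ℕ × ℕ} {E : Finset (ℕ × ℕ)} (h₀ : p₀ ∈ T.D) (hE : p₀ ∉ E) :
    T.residualPts E = insert (T.point p₀) (T.residualPts (insert p₀ E)) := by
  rw [residualPts, residualPts, ← image_insert, sdiff_insert, insert_erase (mem_sdiff.2 ⟨h₀, hE⟩)]

theorem mem_D_iff_lt_colCount {r c : ℕ} : (r, c) ∈ T.D ↔ r < T.colCount c := by
  constructor
  · intro h
    calc r < #(range (r + 1) ×ˢ {c}) := by simp
      _ ≤ T.colCount c := card_le_card fun x hx => by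
        simp only [mem_product, mem_range, mem_singleton] at hx
        exact mem_filter.2 ⟨T.lower _ h x (by omega) hx.2.le, hx.2⟩
  · contrapose!
    intro h
    calc T.colCount c ≤ #(range r ×ˢ {c}) := card_le_card fun x hx => by
          obtain ⟨hxD, rfl⟩ := mem_filter.1 hx
          simp only [mem_product, mem_range, mem_singleton, and_true]
          by_contra! hrx
          exact h (T.lower _ hxD _ hrx le_rfl)
      _ = r := by simp

theorem mem_D_iff_lt_rowCount {r c : ℕ} : (r, c) ∈ T.D ↔ c < T.rowCount r := by
  constructor
  · intro h
    calc c < #({r} ×ˢ range (c + 1)) := by simp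
      _ ≤ T.rowCount r := card_le_card fun x hx => by
        simp only [mem_product, mem_range, mem_singleton] at hx
        exact mem_filter.2 ⟨T.lower _ h x hx.1.le (by omega), hx.1⟩
  · contrapose!
    intro h
    calc T.rowCount r ≤ #({r} ×ˢ range c) := card_le_card fun x hx => by
          obtain ⟨hxD, rfl⟩ := mem_filter.1 hx
          simp only [mem_product, mem_range, mem_singleton, true_and]
          by_contra! hcx
          exact h (T.lower _ hxD _ le_rfl hcx)
      _ = c := by simp

theorem R_injOn_column (c : ℕ) : Set.InjOn T.R {r | r < T.colCount c} := fun r hr r' hr' h =>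
  T.hR r (T.bound _ (T.mem_D_iff_lt_colCount.2 hr)).1 r'
    (T.bound _ (T.mem_D_iff_lt_colCount.2 hr')).1 h

theorem C_injOn_row (r : ℕ) : Set.InjOn T.C {c | c < T.rowCount r} := fun c hc c' hc' h =>
  T.hC c (T.bound _ (T.mem_D_iff_lt_rowCount.2 hc)).2 c'
    (T.bound _ (T.mem_D_iff_lt_rowCount.2 hc')).2 h

/-- The rows through the points of `X` other than `P_{p₀}` on the column of `P_{p₀}`. -/
noncomputable def otherRows (p₀ : ℕ × ℕ) : Finset (P1 k) :=
  ((range (T.colCount p₀.2)).erase p₀.1).image T.R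

/-- The columns through the points of `X` other than `P_{p₀}` on the row of `P_{p₀}`. -/
noncomputable def otherCols (p₀ : ℕ × ℕ) : Finset (P1 k) :=
  ((range (T.rowCount p₀.1)).erase p₀.2).image T.C

variable {T} {p₀ : ℕ × ℕ} {E : Finset (ℕ × ℕ)}

theorem mk_mem_residualPts_of_mem_otherRows (hE : ∀ e ∈ E, e.1 ≠ p₀.1 ∧ e.2 ≠ p₀.2)
    {a : P1 k} (ha : a ∈ T.otherRows p₀) : (a, T.C p₀.2) ∈ T.residualPts (insert p₀ E) := by
  obtain ⟨r, hr, rfl⟩ := mem_image.1 ha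
  rw [mem_erase, mem_range] at hr
  refine mem_image.2 ⟨(r, p₀.2), mem_sdiff.2 ⟨T.mem_D_iff_lt_colCount.2 hr.2, ?_⟩, rfl⟩
  rw [mem_insert, not_or]
  exact ⟨fun h => hr.1 (congrArg Prod.fst h), fun h => (hE _ h).2 rfl⟩

theorem mk_mem_residualPts_of_mem_otherCols (hE : ∀ e ∈ E, e.1 ≠ p₀.1 ∧ e.2 ≠ p₀.2)
    {b : P1 k} (hb : b ∈ T.otherCols p₀) : (T.R p₀.1, b) ∈ T.residualPts (insert p₀ E) := by
  obtain ⟨c, hc, rfl⟩ := mem_image.1 hb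
  rw [mem_erase, mem_range] at hc
  refine mem_image.2 ⟨(p₀.1, c), mem_sdiff.2 ⟨T.mem_D_iff_lt_rowCount.2 hc.2, ?_⟩, rfl⟩
  rw [mem_insert, not_or]
  exact ⟨fun h => hc.1 (congrArg Prod.snd h), fun h => (hE _ h).1 rfl⟩

variable (h₀ : p₀ ∈ T.D)
include h₀

theorem card_otherRows : #(T.otherRows p₀) = T.colCount p₀.2 - 1 := by
  rw [otherRows, card_image_of_injOn ((T.R_injOn_column _).mono fun r hr => by
    simpa using (mem_erase.1 hr).2), card_erase_of_mem, card_range]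
  simpa using T.mem_D_iff_lt_colCount.1 h₀

theorem card_otherCols : #(T.otherCols p₀) = T.rowCount p₀.1 - 1 := by
  rw [otherCols, card_image_of_injOn ((T.C_injOn_row _).mono fun c hc => by
    simpa using (mem_erase.1 hc).2), card_erase_of_mem, card_range]
  simpa using T.mem_D_iff_lt_rowCount.1 h₀

theorem R_notMem_otherRows : T.R p₀.1 ∉ T.otherRows p₀ := by
  simp only [otherRows, mem_image, mem_erase, mem_range, not_exists, not_and]
  exact fun r ⟨hr, hrc⟩ h => hr (T.R_injOn_column _ hrc (T.mem_D_iff_lt_colCount.1 h₀) h)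

theorem C_notMem_otherCols : T.C p₀.2 ∉ T.otherCols p₀ := by
  simp only [otherCols, mem_image, mem_erase, mem_range, not_exists, not_and]
  exact fun c ⟨hc, hcr⟩ h => hc (T.C_injOn_row _ hcr (T.mem_D_iff_lt_rowCount.1 h₀) h)

theorem mem_otherRows_or_mem_otherCols {p : ℕ × ℕ} (hp : p ∈ T.D) (hne : p ≠ p₀) :
    T.R p.1 ∈ T.otherRows p₀ ∨ T.C p.2 ∈ T.otherCols p₀ := by
  obtain ⟨r, c⟩ := p
  obtain ⟨r₀, c₀⟩ := p₀
  simp only [otherRows, otherCols, mem_image, mem_erase, mem_range]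
  by_cases hr : r ≠ r₀ ∧ r < T.colCount c₀
  · exact Or.inl ⟨r, hr, rfl⟩
  refine Or.inr ⟨c, ?_, rfl⟩
  rcases eq_or_ne r r₀ with rfl | hrr
  · exact ⟨fun hc => hne (by rw [hc]), T.mem_D_iff_lt_rowCount.1 hp⟩
  · -- the row of `p` misses the column of `P_{p₀}`, so `p` lies left of that column
    have hcc : c < c₀ := by
      by_contra! hcc
      exact hr ⟨hrr, T.mem_D_iff_lt_colCount.1 (T.lower _ hp (r, c₀) le_rfl hcc)⟩
    exact ⟨hcc.ne, hcc.trans (T.mem_D_iff_lt_rowCount.1 h₀)⟩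

theorem mem_sepDegs_residual_iff [Infinite k] (hE : ∀ e ∈ E, e.1 ≠ p₀.1 ∧ e.2 ≠ p₀.2)
    {i j : ℕ} : (i, j) ∈ SepDegs (T.residual (insert p₀ E)) (T.point p₀) ↔
      T.colCount p₀.2 ≤ i + 1 ∧ T.rowCount p₀.1 ≤ j + 1 := by
  have hA := card_otherRows h₀
  have hB := card_otherCols h₀
  rw [residual_eq]
  constructor
  · intro h
    by_contra! hlt
    by_cases hi : T.colCount p₀.2 ≤ i + 1
    · exact notMem_sepDegs_of_lt_card_row (fun b hb => mk_mem_residualPts_of_mem_otherCols hE hb)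
        (by have := hlt hi; omega) h
    · exact notMem_sepDegs_of_lt_card_column
        (fun a ha => mk_mem_residualPts_of_mem_otherRows hE ha) (by omega) h
  · rintro ⟨hi, hj⟩
    refine mem_sepDegs_of_subset_lines (R_notMem_otherRows h₀) (C_notMem_otherCols h₀)
      (fun x hx => ?_) (by omega) (by omega)
    obtain ⟨p, hp, rfl⟩ := mem_image.1 hx
    rw [mem_sdiff, mem_insert, not_or] at hp
    exact mem_otherRows_or_mem_otherCols h₀ hp.1 hp.2.1

end Staircase

end

/-- removing interior points with pairwise distinct rows and columns one at
a time, the Hilbert function drops by exactly 1 on the quadrant (q_{l+1},p_{l+1}) + ℕ². -/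
theorem stmt13 (k : Type) [Field k] [IsAlgClosed k] (T : Staircase k)
    (h : ℕ) (pt : Fin h → ℕ × ℕ)
    (hmem : ∀ l, T.Interior (pt l).1 (pt l).2)
    (hrow : ∀ l l', (pt l).1 = (pt l').1 → l = l')
    (hcol : ∀ l l', (pt l).2 = (pt l').2 → l = l')
    (q p : Fin h → ℕ)
    (hq : ∀ l, T.colCount (pt l).2 = q l + 1)
    (hp : ∀ l, T.rowCount (pt l).1 = p l + 1) :
    ∀ l : ℕ, 1 ≤ l → ∀ hl : l < h, ∀ i j : ℕ,
      ((q ⟨l, hl⟩ ≤ i ∧ p ⟨l, hl⟩ ≤ j) →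
        (hilb (T.residual ((Finset.univ.filter (fun m : Fin h => (m : ℕ) < l + 1)).image pt)) i j : ℤ) =
          (hilb (T.residual ((Finset.univ.filter (fun m : Fin h => (m : ℕ) < l)).image pt)) i j : ℤ) - 1) ∧
      (¬ (q ⟨l, hl⟩ ≤ i ∧ p ⟨l, hl⟩ ≤ j) →
        hilb (T.residual ((Finset.univ.filter (fun m : Fin h => (m : ℕ) < l + 1)).image pt)) i j =
          hilb (T.residual ((Finset.univ.filter (fun m : Fin h => (m : ℕ) < l)).image pt)) i j) := by
  intro l _ hl i j
  set L : Fin h := ⟨l, hl⟩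
  set E := (univ.filter (fun m : Fin h => (m : ℕ) < l)).image pt
  have hE : ∀ e ∈ E, e.1 ≠ (pt L).1 ∧ e.2 ≠ (pt L).2 := by
    simp only [E, mem_image, mem_filter, mem_univ, true_and]
    rintro _ ⟨m, hm, rfl⟩
    have hmL : m ≠ L := fun h => by simp [h, L] at hm
    exact ⟨fun h => hmL (hrow m L h), fun h => hmL (hcol m L h)⟩
  have hnext : (univ.filter (fun m : Fin h => (m : ℕ) < l + 1)).image pt = insert (pt L) E := by
    rw [← image_insert]
    congr 1
    ext m
    simp only [mem_insert, mem_filter, mem_univ, true_and, Fin.ext_iff, L]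
    omega
  have h₀ : pt L ∈ T.D := (hmem L).1
  have hsep := Staircase.mem_sepDegs_residual_iff h₀ hE (i := i) (j := j)
  rw [hq, hp, Staircase.residual_eq] at hsep
  rw [hnext, Staircase.residual_eq, Staircase.residual_eq,
    T.residualPts_eq_insert h₀ fun h => (hE _ h).1 rfl]
  constructor
  · intro hij
    rw [hilb_insert_of_mem_sepDegs (hsep.2 (by omega))]
    push_cast
    ring
  · intro hij
    exact (hilb_insert_of_notMem_sepDegs fun h => hij (by have := hsep.1 h; omega)).symm
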